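/- arXiv:2306.14716 — 5 statements merged into one kernel-verified Lean document; each statement's English description precedes it below -/
import Mathlib

section
/- Nonempty open active sets of efficient representations: Let k ≥ 1 and let f : ℝⁿ → ℝ admit an efficient C^k Min-type representation {α₁, …, α_m} at q. Then for every index i and every neighborhood V of q, the interior of the active set Aᵢ = {f = αᵢ} intersects V; in particular each open active set Aᵢ° is nonempty as a germ at q. -/
/-!
If the interior of the active set `Aᵢ` missed some neighbourhood `V` of `q`, then at every point
of `N ∩ V` some other `αⱼ` would be active: where `αᵢ` alone attains the minimum, continuity keeps
it the only active function nearby, which would put the point in the interior of `Aᵢ`. Dropping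
`αᵢ` then gives a representation with `m - 1` functions on `N ∩ interior V`, against efficiency.
-/

noncomputable section

open Set

/-- Euclidean space `ℝⁿ`. -/
abbrev Euc (n : ℕ) : Type := EuclideanSpace ℝ (Fin n)

/-- `f` admits the `C^k` Min-type representation `{α₁, …, α_m}` at `q` on the specific
neighborhood `N`: each `αᵢ` is `C^k` on `N` and `f = min αᵢ` on `N`. -/
def IsMinTypeRepOn {n : ℕ} (k : ℕ) {m : ℕ} (f : Euc n → ℝ) (α : Fin m → Euc n → ℝ)
    (q : Euc n) (N : Set (Euc n)) : Prop :=
  IsOpen N ∧ q ∈ N ∧ (∀ i, ContDiffOn ℝ k (α i) N) ∧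
    ∀ x ∈ N, (∀ i, f x ≤ α i x) ∧ ∃ i, f x = α i x

/-- `f` admits the `C^k` Min-type representation `{α₁, …, α_m}` at `q`. -/
def IsMinTypeRep {n : ℕ} (k : ℕ) {m : ℕ} (f : Euc n → ℝ) (α : Fin m → Euc n → ℝ)
    (q : Euc n) : Prop :=
  ∃ N : Set (Euc n), IsMinTypeRepOn k f α q N

open Filter Topology

namespace IsMinTypeRepOn

variable {n k m : ℕ} {f : Euc n → ℝ} {q : Euc n} {N : Set (Euc n)}

theorem mono {α : Fin m → Euc n → ℝ} (h : IsMinTypeRepOn k f α q N) {U : Set (Euc n)}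
    (hU : IsOpen U) (hqU : q ∈ U) (hUN : U ⊆ N) : IsMinTypeRepOn k f α q U :=
  ⟨hU, hqU, fun i => (h.2.2.1 i).mono hUN, fun x hx => h.2.2.2 x (hUN hx)⟩

theorem removeNth {α : Fin (m + 1) → Euc n → ℝ} (h : IsMinTypeRepOn k f α q N) (i : Fin (m + 1))
    (hactive : ∀ x ∈ N, ∃ j ≠ i, f x = α j x) : IsMinTypeRepOn k f (i.removeNth α) q N := by
  obtain ⟨hN, hqN, hsmooth, hmin⟩ := h
  refine ⟨hN, hqN, fun j => hsmooth _, fun x hx => ⟨fun j => (hmin x hx).1 _, ?_⟩⟩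
  obtain ⟨j, hji, hj⟩ := hactive x hx
  obtain ⟨j', rfl⟩ := Fin.exists_succAbove_eq hji
  exact ⟨j', hj⟩

theorem exists_active_ne_of_notMem_interior {α : Fin m → Euc n → ℝ}
    (h : IsMinTypeRepOn k f α q N) {x : Euc n} (hf : ContinuousAt f x) (hx : x ∈ N) (i : Fin m)
    (hxi : x ∉ interior {y ∈ N | f y = α i y}) : ∃ j ≠ i, f x = α j x := by
  obtain ⟨hN, -, hsmooth, hmin⟩ := h
  by_contra! hinactive
  have hlt : ∀ j ≠ i, f x < α j x := fun j hj =>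
    ((hmin x hx).1 j).lt_of_ne (hinactive j hj)
  have hlt_near : ∀ᶠ y in 𝓝 x, ∀ j ≠ i, f y < α j y := by
    refine eventually_all.2 fun j => ?_
    by_cases hj : j = i
    · exact .of_forall fun _ hji => absurd hj hji
    · have hαj : ContinuousAt (α j) x := (hsmooth j).continuousOn.continuousAt (hN.mem_nhds hx)
      exact (hf.eventually_lt hαj (hlt j hj)).mono fun _ hy _ => hy
  refine hxi (mem_interior_iff_mem_nhds.2 ?_)
  filter_upwards [hlt_near, hN.mem_nhds hx] with y hy hyN
  obtain ⟨j, hj⟩ := (hmin y hyN).2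
  obtain rfl | hji := eq_or_ne j i
  · exact ⟨hyN, hj⟩
  · exact absurd hj (hy j hji).ne

end IsMinTypeRepOn

theorem efficient_rep_open_active_sets_nonempty_general {n : ℕ} (k m : ℕ)
    (f : Euc n → ℝ) (hf : Continuous f) (q : Euc n)
    (α : Fin m → Euc n → ℝ) (N : Set (Euc n))
    (hrep : IsMinTypeRepOn k f α q N)
    (heff : ∀ (m' : ℕ) (β : Fin m' → Euc n → ℝ), IsMinTypeRep k f β q → m ≤ m') :
    ∀ i, ∀ V ∈ nhds q, (interior {x ∈ N | f x = α i x} ∩ V).Nonempty := by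
  intro i V hV
  by_contra! hempty
  obtain ⟨m, rfl⟩ := Nat.exists_eq_add_one_of_ne_zero i.pos.ne'
  have hrep' : IsMinTypeRepOn k f α q (N ∩ interior V) :=
    hrep.mono (hrep.1.inter isOpen_interior) ⟨hrep.2.1, mem_interior_iff_mem_nhds.2 hV⟩
      inter_subset_left
  have hactive : ∀ x ∈ N ∩ interior V, ∃ j ≠ i, f x = α j x := fun x hx =>
    hrep.exists_active_ne_of_notMem_interior hf.continuousAt hx.1 i fun hxi =>
      (eq_empty_iff_forall_notMem.1 hempty) x ⟨hxi, interior_subset hx.2⟩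
  exact (heff m _ ⟨_, hrep'.removeNth i hactive⟩).not_gt (Nat.lt_succ_self m)

/-- **Nonempty open active sets of efficient representations.** If `f` admits an efficient
`C^k` Min-type representation `{α₁, …, α_m}` at `q` (`k ≥ 1`) on a neighborhood `N`, then for
every index `i` and every neighborhood `V` of `q`, the interior of the active set
`Aᵢ = {x ∈ N | f x = αᵢ x}` intersects `V`; i.e. each open active set `Aᵢ°` is nonempty as a
germ at `q`. -/
theorem efficient_rep_open_active_sets_nonempty {n : ℕ} (k m : ℕ) (hk : 1 ≤ k)
    (f : Euc n → ℝ) (hf : Continuous f) (q : Euc n)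
    (α : Fin m → Euc n → ℝ) (N : Set (Euc n))
    (hrep : IsMinTypeRepOn k f α q N)
    (heff : ∀ (m' : ℕ) (β : Fin m' → Euc n → ℝ), IsMinTypeRep k f β q → m ≤ m') :
    ∀ i, ∀ V ∈ nhds q, (interior {x ∈ N | f x = α i x} ∩ V).Nonempty :=
  efficient_rep_open_active_sets_nonempty_general k m f hf q α N hrep heff
end
end

section
/- Connectedness of open active sets of efficient-LIG representations: Let k ≥ 1 and let f : ℝⁿ → ℝ admit an efficient-LIG C^k Min-type representation {α₁, …, α_m} at q. Then for every index i and every neighborhood V of q, there exists an open neighborhood V' ⊆ V of q such that Aᵢ° ∩ V' is nonempty and connected, where Aᵢ° is the interior of the active set Aᵢ = {f = αᵢ}. -/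
/-!
Efficiency forces `f q = α i q`: a piece inactive at `q` could be dropped near `q`. By general
position there is a direction `u` along which every difference `α j - α i` (`j ≠ i`) has
derivative `1` at `q`, hence a positive derivative near `q`. There the interior of `Aᵢ` is exactly
the set where all these differences are positive, since at an interior point where one of them
vanished it would have a local minimum. As the differences increase along `u`, inside a thin
open cylinder `B + [0, T) • u` at `q` this set is a union of segments in direction `u` that all
run into the convex set `B + (s₀, T) • u`, so it is connected.
-/

noncomputable section

open Set

open Filter Topology
open scoped Pointwise

theorem LinearIndependent.exists_inner_eq_one {E ι : Type*} [NormedAddCommGroup E]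
    [InnerProductSpace ℝ E] [Finite ι] {v : ι → E} (hv : LinearIndependent ℝ v) :
    ∃ u : E, ∀ j, inner ℝ (v j) u = 1 := by
  classical
  have := Fintype.ofFinite ι
  obtain ⟨c, hc⟩ := Matrix.mulVec_surjective_iff_isUnit.2
    (Matrix.posDef_gram_of_linearIndependent hv).isUnit (fun _ => 1)
  refine ⟨∑ l, c l • v l, fun j => ?_⟩
  simpa [inner_sum, real_inner_smul_right, Matrix.mulVec, dotProduct, Matrix.gram_apply,
    mul_comm] using congrFun hc j

section

variable {E : Type*} [NormedAddCommGroup E] [NormedSpace ℝ E]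

theorem pos_of_eventually_nonneg_of_fderiv_ne_zero {g : E → ℝ} {x : E}
    (h : ∀ᶠ y in 𝓝 x, 0 ≤ g y) (hd : fderiv ℝ g x ≠ 0) : 0 < g x :=
  h.self_of_nhds.lt_of_ne fun h0 => hd <| IsLocalMin.fderiv_eq_zero <| h.mono fun _ hy => h0 ▸ hy

theorem ContDiffAt.eventually_fderiv_apply_pos {g : E → ℝ} {q u : E} (hg : ContDiffAt ℝ 1 g q)
    (hu : 0 < fderiv ℝ g q u) : ∀ᶠ x in 𝓝 q, DifferentiableAt ℝ g x ∧ 0 < fderiv ℝ g x u :=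
  ((hg.eventually (by simp)).mono fun _ hx => hx.differentiableAt one_ne_zero).and <|
    ((hg.continuousAt_fderiv one_ne_zero).clm_apply continuousAt_const).eventually
      (lt_mem_nhds hu)

theorem strictMonoOn_apply_add_smul {g : E → ℝ} {x u : E} {I : Set ℝ} (hI : Convex ℝ I)
    (hg : ∀ t ∈ I, DifferentiableAt ℝ g (x + t • u) ∧ 0 < fderiv ℝ g (x + t • u) u) :
    StrictMonoOn (fun t => g (x + t • u)) I := by
  have hderiv : ∀ t ∈ I, HasDerivAt (fun t => g (x + t • u)) (fderiv ℝ g (x + t • u) u) t :=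
    fun t ht => by
      have hline : HasDerivAt (fun t : ℝ => x + t • u) u t := by
        simpa using ((hasDerivAt_id t).smul_const u).const_add x
      exact (hg t ht).1.hasFDerivAt.comp_hasDerivAt t hline
  refine strictMonoOn_of_hasDerivWithinAt_pos hI
    (fun t ht => (hderiv t ht).continuousAt.continuousWithinAt)
    (fun t ht => (hderiv t (interior_subset ht)).hasDerivWithinAt)
    (fun t ht => (hg t (interior_subset ht)).2)

theorem exists_pos_forall_add_smul_mem_ball (q u : E) {r : ℝ} (hr : 0 < r) :
    ∃ T : ℝ, 0 < T ∧ ∀ b ∈ Metric.ball q (r / 2), ∀ t ∈ Icc 0 T, b + t • u ∈ Metric.ball q r := by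
  refine ⟨r / (2 * (‖u‖ + 1)), by positivity, fun b hb t ht => ?_⟩
  have htu : ‖t • u‖ ≤ r / 2 := calc
    ‖t • u‖ = t * ‖u‖ := by rw [norm_smul, Real.norm_of_nonneg ht.1]
    _ ≤ r / (2 * (‖u‖ + 1)) * (‖u‖ + 1) := by
      gcongr; exacts [ht.2, le_add_of_nonneg_right zero_le_one]
    _ = r / 2 := by field_simp
  rw [Metric.mem_ball, dist_eq_norm] at hb ⊢
  rw [add_sub_right_comm]
  linarith [norm_add_le (b - q) (t • u)]

theorem isConnected_setOf_pos_of_monotoneOn {ι : Type*} {g : ι → E → ℝ} {B : Set E} {u : E}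
    {s₀ T : ℝ} (hB : Convex ℝ B) (hBne : B.Nonempty) (hs₀ : 0 ≤ s₀) (hs₀T : s₀ < T)
    (hmono : ∀ b ∈ B, ∀ j, MonotoneOn (fun t => g j (b + t • u)) (Ico 0 T))
    (hpos : ∀ b ∈ B, ∀ j, 0 < g j (b + s₀ • u)) :
    IsConnected {x ∈ B + (· • u) '' Ico 0 T | ∀ j, 0 < g j x} := by
  set S := {x ∈ B + (· • u) '' Ico 0 T | ∀ j, 0 < g j x}
  have hray : ∀ b ∈ B, ∀ t ∈ Ico 0 T, b + t • u ∈ B + (· • u) '' Ico 0 T :=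
    fun b hb t ht => add_mem_add hb (mem_image_of_mem _ ht)
  set K := B + (· • u) '' Ioo s₀ T
  have hKS : K ⊆ S := by
    rintro _ ⟨b, hb, _, ⟨t, ht, rfl⟩, rfl⟩
    refine ⟨hray b hb t ⟨hs₀.trans ht.1.le, ht.2⟩, fun j => (hpos b hb j).trans_le ?_⟩
    exact hmono b hb j ⟨hs₀, hs₀T⟩ ⟨hs₀.trans ht.1.le, ht.2⟩ ht.1.le
  have hK : IsPreconnected K :=
    (hB.add ((convex_Ioo s₀ T).is_linear_image (IsLinearMap.isLinearMap_smul' u))).isPreconnected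
  obtain ⟨b₀, hb₀⟩ := hBne
  obtain ⟨s₁, hs₁⟩ := nonempty_Ioo.2 hs₀T
  have hx₀ : b₀ + s₁ • u ∈ K := add_mem_add hb₀ (mem_image_of_mem _ hs₁)
  refine ⟨⟨_, hKS hx₀⟩, isPreconnected_of_forall (b₀ + s₁ • u) ?_⟩
  rintro _ ⟨⟨b, hb, _, ⟨t₀, ht₀, rfl⟩, rfl⟩, hy⟩
  obtain ⟨σ, hσ, hσT⟩ := exists_between (max_lt ht₀.2 hs₀T)
  have hR : (fun t => b + t • u) '' Icc t₀ σ ⊆ S := by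
    rintro _ ⟨t, ht, rfl⟩
    have ht' : t ∈ Ico 0 T := ⟨ht₀.1.trans ht.1, ht.2.trans_lt hσT⟩
    exact ⟨hray b hb t ht', fun j => (hy j).trans_le (hmono b hb j ht₀ ht' ht.1)⟩
  have hσK : b + σ • u ∈ K :=
    add_mem_add hb (mem_image_of_mem _ ⟨(le_max_right _ _).trans_lt hσ, hσT⟩)
  refine ⟨_ ∪ K, union_subset hR hKS, Or.inr hx₀,
    Or.inl (mem_image_of_mem _ ⟨le_rfl, (le_max_left _ _).trans hσ.le⟩), ?_⟩
  refine IsPreconnected.union _ (mem_image_of_mem _ ⟨(le_max_left _ _).trans hσ.le, le_rfl⟩) hσK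
    ?_ hK
  exact (convex_Icc t₀ σ).isPreconnected.image _ (by fun_prop)

theorem exists_isOpen_isConnected_setOf_pos {ι : Type*} [Finite ι] {g : ι → E → ℝ} {q u : E}
    (hd : ∀ᶠ x in 𝓝 q, ∀ j, DifferentiableAt ℝ (g j) x ∧ 0 < fderiv ℝ (g j) x u)
    (hq : ∀ j, 0 ≤ g j q) {V : Set E} (hV : V ∈ 𝓝 q) :
    ∃ V' : Set E, IsOpen V' ∧ q ∈ V' ∧ V' ⊆ V ∧ IsConnected {x ∈ V' | ∀ j, 0 < g j x} := by
  obtain ⟨r, hr, hrV⟩ := Metric.mem_nhds_iff.1 (inter_mem hV hd)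
  obtain ⟨T, hT, hline⟩ := exists_pos_forall_add_smul_mem_ball q u hr
  have hmono : ∀ b ∈ Metric.ball q (r / 2), ∀ j,
      StrictMonoOn (fun t => g j (b + t • u)) (Icc 0 T) :=
    fun b hb j => strictMonoOn_apply_add_smul (convex_Icc 0 T)
      fun t ht => (hrV (hline b hb t ht)).2 j
  have hqr : q ∈ Metric.ball q (r / 2) := Metric.mem_ball_self (by positivity)
  have hT₁ : T / 2 ∈ Icc 0 T := ⟨by positivity, by linarith⟩
  have hq₁ : ∀ j, 0 < g j (q + (T / 2) • u) := fun j =>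
    (hq j).trans_lt <| by
      simpa using hmono q hqr j ⟨le_rfl, hT.le⟩ hT₁ (by positivity)
  have hpos : ∀ᶠ b in 𝓝 q, ∀ j, 0 < g j (b + (T / 2) • u) := by
    refine eventually_all.2 fun j => ?_
    have hcont : ContinuousAt (fun b => g j (b + (T / 2) • u)) q :=
      ((hrV (hline q hqr _ hT₁)).2 j).1.continuousAt.comp (f := fun b => b + (T / 2) • u)
        (by fun_prop)
    exact hcont.eventually (lt_mem_nhds (hq₁ j))
  obtain ⟨δ, hδ, hδpos⟩ := Metric.mem_nhds_iff.1 hpos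
  set B := Metric.ball q (min δ (r / 2))
  have hBr : B ⊆ Metric.ball q (r / 2) := Metric.ball_subset_ball (min_le_right _ _)
  refine ⟨B + (· • u) '' Ico 0 T, Metric.isOpen_ball.add_right, ?_, ?_, ?_⟩
  · exact ⟨q, Metric.mem_ball_self (by positivity), 0 • u, mem_image_of_mem _ (left_mem_Ico.2 hT),
      by simp⟩
  · rintro _ ⟨b, hb, _, ⟨t, ht, rfl⟩, rfl⟩
    exact (hrV (hline b (hBr hb) t (Ico_subset_Icc_self ht))).1
  · exact isConnected_setOf_pos_of_monotoneOn (convex_ball _ _)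
      (Metric.nonempty_ball.2 (by positivity)) (by positivity) (by linarith)
      (fun b hb j => (hmono b (hBr hb) j).monotoneOn.mono Ico_subset_Icc_self)
      (fun b hb => hδpos (Metric.ball_subset_ball (min_le_left _ _) hb))

end

namespace IsMinTypeRepOn

variable {n k m : ℕ} {f : Euc n → ℝ} {α : Fin m → Euc n → ℝ} {q : Euc n} {N : Set (Euc n)}

theorem continuousAt (h : IsMinTypeRepOn k f α q N) (j : Fin m) {x : Euc n} (hx : x ∈ N) :
    ContinuousAt (α j) x :=
  (h.2.2.1 j).continuousOn.continuousAt (h.1.mem_nhds hx)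

-- `α i` is never active where it exceeds a piece `α j` that is active at `q`.
theorem isMinTypeRep_succAbove {α : Fin (m + 1) → Euc n → ℝ} (h : IsMinTypeRepOn k f α q N)
    {i : Fin (m + 1)} (hi : f q < α i q) : IsMinTypeRep k f (fun j => α (i.succAbove j)) q := by
  obtain ⟨hN, hqN, hα, hmin⟩ := h
  obtain ⟨j, hj⟩ := (hmin q hqN).2
  refine ⟨N ∩ (fun x => α i x - α j x) ⁻¹' Ioi 0,
    ⟨((hα i).continuousOn.sub (hα j).continuousOn).isOpen_inter_preimage hN isOpen_Ioi,
      ⟨hqN, sub_pos.2 (hj ▸ hi)⟩, fun l => (hα _).mono inter_subset_left,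
      fun x hx => ⟨fun l => (hmin x hx.1).1 _, ?_⟩⟩⟩
  obtain ⟨l, hl⟩ := (hmin x hx.1).2
  have hji : α j x < α i x := sub_pos.1 hx.2
  have hli : l ≠ i := by
    rintro rfl
    linarith [(hmin x hx.1).1 j]
  obtain ⟨l', rfl⟩ := Fin.exists_succAbove_eq hli
  exact ⟨l', hl⟩

theorem apply_eq_of_efficient (h : IsMinTypeRepOn k f α q N)
    (heff : ∀ (m' : ℕ) (β : Fin m' → Euc n → ℝ), IsMinTypeRep k f β q → m ≤ m') (i : Fin m) :
    f q = α i q := by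
  cases m with
  | zero => exact i.elim0
  | succ m =>
    by_contra hne
    have := heff m _ (h.isMinTypeRep_succAbove (((h.2.2.2 q h.2.1).1 i).lt_of_ne hne))
    omega

theorem eventually_fderiv_sub_apply_pos (h : IsMinTypeRepOn k f α q N) (hk : 1 ≤ k)
    {i j : Fin m} {u : Euc n} (hu : 0 < inner ℝ (gradient (α j) q - gradient (α i) q) u) :
    ∀ᶠ x in 𝓝 q, DifferentiableAt ℝ (fun y => α j y - α i y) x ∧
      0 < fderiv ℝ (fun y => α j y - α i y) x u := by
  have hα : ∀ l, ContDiffAt ℝ 1 (α l) q := fun l =>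
    ((h.2.2.1 l).contDiffAt (h.1.mem_nhds h.2.1)).of_le (by exact_mod_cast hk)
  refine ((hα j).sub (hα i)).eventually_fderiv_apply_pos ?_
  rwa [fderiv_fun_sub ((hα j).differentiableAt one_ne_zero) ((hα i).differentiableAt one_ne_zero),
    sub_apply, ← inner_gradient_left, ← inner_gradient_left, ← inner_sub_left]

theorem mem_interior_activeSet_iff (h : IsMinTypeRepOn k f α q N) {i : Fin m} {x : Euc n}
    (hx : x ∈ N) (hd : ∀ j ≠ i, fderiv ℝ (fun y => α j y - α i y) x ≠ 0) :
    x ∈ interior {y ∈ N | f y = α i y} ↔ ∀ j ≠ i, α i x < α j x := by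
  have hmin := h.2.2.2
  constructor
  · intro hxA j hj
    have hnonneg : ∀ᶠ y in 𝓝 x, 0 ≤ α j y - α i y := by
      filter_upwards [mem_interior_iff_mem_nhds.1 hxA] with y hy
      linarith [(hmin y hy.1).1 j, hy.2]
    exact sub_pos.1 <|
      pos_of_eventually_nonneg_of_fderiv_ne_zero (g := fun y => α j y - α i y) hnonneg (hd j hj)
  · intro hlt
    have hstrict : ∀ᶠ y in 𝓝 x, ∀ j ≠ i, α i y < α j y := eventually_all.2 fun j => by
      by_cases hj : j = i
      · exact .of_forall fun _ hji => absurd hj hji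
      · exact ((h.continuousAt i hx).eventually_lt (h.continuousAt j hx) (hlt j hj)).mono
          fun _ hy _ => hy
    rw [mem_interior_iff_mem_nhds]
    filter_upwards [h.1.mem_nhds hx, hstrict] with y hyN hy
    obtain ⟨j, hj⟩ := (hmin y hyN).2
    refine ⟨hyN, ?_⟩
    by_cases hji : j = i
    · exact hji ▸ hj
    · linarith [hy j hji, (hmin y hyN).1 i]

end IsMinTypeRepOn

theorem efficient_LIG_rep_open_active_sets_connected_general {n : ℕ} (k m : ℕ) (hk : 1 ≤ k)
    (f : Euc n → ℝ) (q : Euc n)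
    (α : Fin m → Euc n → ℝ) (N : Set (Euc n))
    (hrep : IsMinTypeRepOn k f α q N)
    (heff : ∀ (m' : ℕ) (β : Fin m' → Euc n → ℝ), IsMinTypeRep k f β q → m ≤ m')
    (hLIG : AffineIndependent ℝ fun i => gradient (α i) q) :
    ∀ i, ∀ V ∈ nhds q, ∃ V' : Set (Euc n), IsOpen V' ∧ q ∈ V' ∧ V' ⊆ V ∧
      IsConnected (interior {x ∈ N | f x = α i x} ∩ V') := by
  intro i V hV
  have hfq : f q = α i q := hrep.apply_eq_of_efficient heff i
  obtain ⟨u, hu⟩ :=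
    ((affineIndependent_iff_linearIndependent_vsub ℝ _ i).1 hLIG).exists_inner_eq_one
  set g : {j // j ≠ i} → Euc n → ℝ := fun j y => α j y - α i y
  have hd : ∀ᶠ x in 𝓝 q, ∀ j, DifferentiableAt ℝ (g j) x ∧ 0 < fderiv ℝ (g j) x u :=
    eventually_all.2 fun j =>
      hrep.eventually_fderiv_sub_apply_pos hk (by rw [← vsub_eq_sub, hu j]; exact one_pos)
  have hq : ∀ j, 0 ≤ g j q := fun j => sub_nonneg.2 (hfq ▸ (hrep.2.2.2 q hrep.2.1).1 j)
  obtain ⟨V', hV'o, hqV', hV'V, hconn⟩ := exists_isOpen_isConnected_setOf_pos hd hq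
    (inter_mem hV (inter_mem (hrep.1.mem_nhds hrep.2.1) hd))
  have hA : interior {x ∈ N | f x = α i x} ∩ V' = {x ∈ V' | ∀ j, 0 < g j x} := by
    ext x
    refine and_comm.trans (and_congr_right fun hx => ?_)
    obtain ⟨-, hxN, hxd⟩ := hV'V hx
    rw [hrep.mem_interior_activeSet_iff hxN fun j hj => ne_of_apply_ne (· u) (hxd ⟨j, hj⟩).2.ne']
    simp only [g, sub_pos, Subtype.forall]
  exact ⟨V', hV'o, hqV', fun x hx => (hV'V hx).1, hA ▸ hconn⟩

/-- **Connectedness of open active sets of efficient-LIG representations.** If `f` admits an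
efficient-LIG `C^k` Min-type representation `{α₁, …, α_m}` at `q` (`k ≥ 1`) on a neighborhood
`N`, then for every index `i` and every neighborhood `V` of `q`, there is an open neighborhood
`V' ⊆ V` of `q` such that `Aᵢ° ∩ V'` is nonempty and connected, where `Aᵢ°` is the interior
of the active set `Aᵢ = {x ∈ N | f x = αᵢ x}`. -/
theorem efficient_LIG_rep_open_active_sets_connected {n : ℕ} (k m : ℕ) (hk : 1 ≤ k)
    (f : Euc n → ℝ) (hf : Continuous f) (q : Euc n)
    (α : Fin m → Euc n → ℝ) (N : Set (Euc n))
    (hrep : IsMinTypeRepOn k f α q N)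
    (heff : ∀ (m' : ℕ) (β : Fin m' → Euc n → ℝ), IsMinTypeRep k f β q → m ≤ m')
    (hLIG : AffineIndependent ℝ fun i => gradient (α i) q) :
    ∀ i, ∀ V ∈ nhds q, ∃ V' : Set (Euc n), IsOpen V' ∧ q ∈ V' ∧ V' ⊆ V ∧
      IsConnected (interior {x ∈ N | f x = α i x} ∩ V') :=
  efficient_LIG_rep_open_active_sets_connected_general k m hk f q α N hrep heff hLIG
end
end

section
/- Min-type critical points are critical points of the restriction: Let α₁, …, α_m : ℝⁿ → ℝ be C¹ on a neighborhood of q with α₁(q) = ⋯ = α_m(q), and suppose 0 lies in the convex hull of {∇α₁(q), …, ∇α_m(q)}. Let s ≥ 0 and let ψ be any map from a neighborhood of 0 in ℝ^s to ℝⁿ that is differentiable at 0, with ψ(0) = q and whose image is contained in the equality set {x : α₁(x) = ⋯ = α_m(x)}. Then the derivative of α₁ ∘ ψ at 0 is zero; that is, q is a critical point of the restriction of any αᵢ (equivalently, of f = min{α₁, …, α_m}) to the equality set. -/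
noncomputable section

open Set

open Filter Topology InnerProductSpace

/-! The gradients enter only through the linear map `g ↦ ⟪g, ·⟫ ∘ Dψ(0)`, which by the chain rule
sends each `∇αᵢ(q)` to `D(αᵢ ∘ ψ)(0)`; these all coincide because the `αᵢ ∘ ψ` agree near `0`.
A linear image of a convex hull is the convex hull of the image, here a single point, and it
contains the image of `0`. -/

theorem LinearMap.map_eq_zero_of_zero_mem_convexHull {𝕜 M N ι : Type*} [Field 𝕜] [LinearOrder 𝕜]
    [IsStrictOrderedRing 𝕜] [AddCommGroup M] [Module 𝕜 M] [AddCommGroup N] [Module 𝕜 N]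
    (φ : M →ₗ[𝕜] N) {v : ι → M} (h0 : 0 ∈ convexHull 𝕜 (Set.range v))
    (hconst : ∀ i j, φ (v i) = φ (v j)) (i : ι) : φ (v i) = 0 := by
  have himage : φ '' Set.range v ⊆ {φ (v i)} := by
    rintro _ ⟨_, ⟨j, rfl⟩, rfl⟩
    exact hconst j i
  have hmem : φ 0 ∈ convexHull 𝕜 (φ '' Set.range v) :=
    φ.image_convexHull (Set.range v) ▸ mem_image_of_mem φ h0
  rw [map_zero] at hmem
  simpa [eq_comm] using convexHull_mono himage hmem

theorem fderiv_comp_eq_zero_of_zero_mem_convexHull_gradient {E F ι : Type*}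
    [NormedAddCommGroup E] [NormedSpace ℝ E] [NormedAddCommGroup F] [InnerProductSpace ℝ F]
    [CompleteSpace F] {f : ι → F → ℝ} {ψ : E → F} {x : E}
    (hf : ∀ i, DifferentiableAt ℝ (f i) (ψ x)) (hψ : DifferentiableAt ℝ ψ x)
    (hconv : 0 ∈ convexHull ℝ (range fun i => gradient (f i) (ψ x)))
    (heq : ∀ i j, (fun w => f i (ψ w)) =ᶠ[𝓝 x] fun w => f j (ψ w)) (i : ι) :
    fderiv ℝ (fun w => f i (ψ w)) x = 0 := by
  let φ : F →ₗ[ℝ] E →L[ℝ] ℝ :=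
    ((ContinuousLinearMap.compL ℝ E F ℝ).flip (fderiv ℝ ψ x)).toLinearMap ∘ₗ
      (toDual ℝ F).toLinearEquiv.toLinearMap
  have hchain : ∀ i, fderiv ℝ (fun w => f i (ψ w)) x = φ (gradient (f i) (ψ x)) := fun i => by
    simp [φ, toDual_gradient, ← fderiv_comp x (hf i) hψ, Function.comp_def]
  rw [hchain]
  refine φ.map_eq_zero_of_zero_mem_convexHull hconv (fun i j => ?_) i
  rw [← hchain, ← hchain, (heq i j).fderiv_eq]

theorem minType_crit_is_crit_of_restriction_general {n : ℕ} (m s : ℕ)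
    (α : Fin m → Euc n → ℝ) (q : Euc n)
    (N : Set (Euc n)) (hN : IsOpen N) (hqN : q ∈ N)
    (hC1 : ∀ i, ContDiffOn ℝ 1 (α i) N)
    (hconv : (0 : Euc n) ∈ convexHull ℝ (Set.range fun i => gradient (α i) q))
    (ψ : Euc s → Euc n) (hψdiff : DifferentiableAt ℝ ψ 0) (hψ0 : ψ 0 = q)
    (W : Set (Euc s)) (hW : W ∈ nhds (0 : Euc s))
    (himg : ∀ w ∈ W, ∀ i j, α i (ψ w) = α j (ψ w)) :
    ∀ i, fderiv ℝ (fun w => α i (ψ w)) 0 = 0 := by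
  subst hψ0
  have hdiff : ∀ i, DifferentiableAt ℝ (α i) (ψ 0) := fun i =>
    ((hC1 i).contDiffAt (hN.mem_nhds hqN)).differentiableAt one_ne_zero
  exact fderiv_comp_eq_zero_of_zero_mem_convexHull_gradient hdiff hψdiff hconv
    fun i j => eventuallyEq_of_mem hW fun w hw => himg w hw i j

/-- **Min-type critical points are critical points of the restriction.** Let `α₁, …, α_m` be
`C¹` on a neighborhood of `q`, with equal values at `q`, and suppose `0` lies in the convex
hull of the gradients `∇αᵢ(q)` (i.e. `q` is a Min-type critical point of `min αᵢ`). Then for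
any map `ψ` from a neighborhood of `0` in `ℝ^s` to `ℝⁿ`, differentiable at `0`, with
`ψ 0 = q` and image contained in the equality set `{α₁ = ⋯ = α_m}`, the derivative of each
`αᵢ ∘ ψ` at `0` vanishes. -/
theorem minType_crit_is_crit_of_restriction {n : ℕ} (m s : ℕ)
    (α : Fin m → Euc n → ℝ) (q : Euc n)
    (N : Set (Euc n)) (hN : IsOpen N) (hqN : q ∈ N)
    (hC1 : ∀ i, ContDiffOn ℝ 1 (α i) N)
    (heqq : ∀ i j, α i q = α j q)
    (hconv : (0 : Euc n) ∈ convexHull ℝ (Set.range fun i => gradient (α i) q))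
    (ψ : Euc s → Euc n) (hψdiff : DifferentiableAt ℝ ψ 0) (hψ0 : ψ 0 = q)
    (W : Set (Euc s)) (hW : W ∈ nhds (0 : Euc s))
    (himg : ∀ w ∈ W, ∀ i j, α i (ψ w) = α j (ψ w)) :
    ∀ i, fderiv ℝ (fun w => α i (ψ w)) 0 = 0 :=
  minType_crit_is_crit_of_restriction_general m s α q N hN hqN hC1 hconv ψ hψdiff hψ0 W hW himg
end
end

section
/- Existence of contact pieces: Let S ⊆ ℝⁿ be a nonempty compact, locally connected set, let q ∈ ℝⁿ ∖ S, and suppose the contact set Γ(q) = {p₁, …, p_m} is finite, with p₁, …, p_m distinct. Then there exist r > dist(q, S), pairwise disjoint closed connected sets S₁, …, S_m with Sᵢ ⊆ S ∩ closedBall(q, r) and pᵢ in the interior of Sᵢ relative to S, and an open neighborhood N of q such that dist(x, S) = min_{1≤i≤m} dist(x, Sᵢ) for every x ∈ N. -/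
/-!
Choose `ε > 0` so small that the closed `ε`-balls around the contact points are pairwise disjoint.
Local connectedness of `S` gives around each `pᵢ` a connected neighbourhood in `S` inside the
`ε`-ball; its closure is the piece `Sᵢ`. Since the union `U` of these relative neighbourhoods
contains every nearest point of `q`, the compact set `S \ U` stays strictly farther from `q` than
`dist(q, S)`, and by compactness this persists for `x` near `q`: all nearest points of such `x`
lie in `U`, hence in some `Sᵢ`, which gives `dist(x, S) = dist(x, Sᵢ)`.
-/

noncomputable section

open Set

/-- The contact set `Γ(q)` of `q` in `S`: the points of `S` realizing `dist(q, S)`. -/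
def contactSet {n : ℕ} (S : Set (Euc n)) (q : Euc n) : Set (Euc n) :=
  {p ∈ S | dist q p = Metric.infDist q S}

open Filter Topology Metric

section Metric

variable {α : Type*}

theorem exists_pos_pairwise_disjoint_closedBall [MetricSpace α] {ι : Type*} [Finite ι]
    {p : ι → α} (hp : Function.Injective p) :
    ∃ ε > 0, Pairwise fun i j => Disjoint (closedBall (p i) ε) (closedBall (p j) ε) := by
  have hsmall : ∀ᶠ ε in 𝓝[>] (0 : ℝ), ∀ i j, i ≠ j → ε + ε < dist (p i) (p j) := by
    refine eventually_all.2 fun i => eventually_all.2 fun j => ?_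
    rcases eq_or_ne i j with rfl | hij
    · exact .of_forall fun _ h => (h rfl).elim
    have hlim : Tendsto (fun ε : ℝ => ε + ε) (𝓝[>] 0) (𝓝 0) :=
      ((continuous_id.add continuous_id).tendsto' 0 0 (add_zero 0)).mono_left nhdsWithin_le_nhds
    exact (hlim.eventually (gt_mem_nhds (dist_pos.2 (hp.ne hij)))).mono fun _ h _ => h
  obtain ⟨ε, hε, hpos⟩ := (hsmall.and self_mem_nhdsWithin).exists
  exact ⟨ε, hpos, fun i j hij => closedBall_disjoint_closedBall (hε i j hij)⟩

variable [PseudoMetricSpace α]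

theorem eventually_forall_infDist_lt_dist {S K : Set α} (hK : IsCompact K) {q : α}
    (h : ∀ z ∈ K, infDist q S < dist q z) :
    ∀ᶠ x in 𝓝 q, ∀ z ∈ K, infDist x S < dist x z :=
  hK.eventually_forall_of_forall_eventually fun z hz =>
    (isOpen_lt (continuous_infDist_pt S).fst' continuous_dist).mem_nhds (h z hz)

theorem eventually_nearest_points_mem {S U : Set α} (hS : IsCompact S) (hU : IsOpen U) {q : α}
    (h : ∀ y ∈ S, dist q y = infDist q S → y ∈ U) :
    ∀ᶠ x in 𝓝 q, ∀ y ∈ S, dist x y = infDist x S → y ∈ U := by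
  have hfar : ∀ z ∈ S \ U, infDist q S < dist q z := fun z hz =>
    (infDist_le_dist_of_mem hz.1).lt_of_ne fun heq => hz.2 (h z hz.1 heq.symm)
  filter_upwards [eventually_forall_infDist_lt_dist (hS.diff hU) hfar] with x hx y hy hxy
  by_contra hyU
  exact (hx y ⟨hy, hyU⟩).ne' hxy

theorem infDist_eq_infDist_of_subset_of_mem {S T : Set α} (hT : T ⊆ S) {x y : α} (hy : y ∈ T)
    (hxy : infDist x S = dist x y) : infDist x S = infDist x T :=
  (infDist_le_infDist_of_subset hT ⟨y, hy⟩).antisymm (hxy ▸ infDist_le_dist_of_mem hy)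

end Metric

theorem exists_isClosed_isConnected_mem_nhdsWithin {X : Type*} [TopologicalSpace X]
    {S F : Set X} [LocallyConnectedSpace S] (hS : IsClosed S) (hF : IsClosed F) {x : X}
    (hx : x ∈ S) (hFx : F ∈ 𝓝 x) :
    ∃ C, IsClosed C ∧ IsConnected C ∧ C ⊆ S ∧ C ⊆ F ∧ C ∈ 𝓝[S] x := by
  obtain ⟨V, hVF, hVopen, hxV, hVconn⟩ :=
    locallyConnectedSpace_iff_subsets_isOpen_isConnected.1 ‹_› ⟨x, hx⟩ _
      (continuous_subtype_val.continuousAt.preimage_mem_nhds hFx)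
  refine ⟨closure (Subtype.val '' V), isClosed_closure,
    (hVconn.image _ continuous_subtype_val.continuousOn).closure,
    closure_minimal (image_subset_iff.2 fun y _ => y.2) hS,
    closure_minimal (image_subset_iff.2 hVF) hF, ?_⟩
  rw [nhdsWithin_eq_map_subtype_coe hx]
  exact mem_of_superset (Filter.image_mem_map (hVopen.mem_nhds hxV)) subset_closure

theorem exists_contact_pieces_general {n : ℕ} (m : ℕ)
    (S : Set (Euc n)) (hSne : S.Nonempty) (hScpt : IsCompact S)
    (hSlc : LocallyConnectedSpace S)
    (q : Euc n)
    (p : Fin m → Euc n) (hpinj : Function.Injective p)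
    (hΓ : contactSet S q = Set.range p) :
    ∃ r : ℝ, Metric.infDist q S < r ∧
      ∃ Sp : Fin m → Set (Euc n),
        (Pairwise fun i j => Disjoint (Sp i) (Sp j)) ∧
        (∀ i, IsClosed (Sp i) ∧ IsConnected (Sp i) ∧
          Sp i ⊆ S ∩ Metric.closedBall q r ∧
          ∃ O : Set (Euc n), IsOpen O ∧ p i ∈ O ∧ S ∩ O ⊆ Sp i) ∧
        ∃ N : Set (Euc n), IsOpen N ∧ q ∈ N ∧ ∀ x ∈ N,
          (∀ i, Metric.infDist x S ≤ Metric.infDist x (Sp i)) ∧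
          ∃ i, Metric.infDist x S = Metric.infDist x (Sp i) := by
  have hpΓ : ∀ i, p i ∈ contactSet S q := fun i => hΓ ▸ mem_range_self i
  obtain ⟨ε, hε, hdisj⟩ := exists_pos_pairwise_disjoint_closedBall hpinj
  choose C hCclosed hCconn hCS hCball hCnhds using fun i =>
    exists_isClosed_isConnected_mem_nhdsWithin hScpt.isClosed isClosed_closedBall (hpΓ i).1
      (closedBall_mem_nhds (p i) hε)
  choose O hOopen hpO hOC using fun i => mem_nhdsWithin.1 (hCnhds i)
  have hnear : ∀ᶠ x in 𝓝 q, ∀ y ∈ S, dist x y = infDist x S → y ∈ ⋃ i, O i :=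
    eventually_nearest_points_mem hScpt (isOpen_iUnion hOopen) fun y hy hqy => by
      obtain ⟨i, rfl⟩ : y ∈ range p := hΓ ▸ ⟨hy, hqy⟩
      exact mem_iUnion.2 ⟨i, hpO i⟩
  obtain ⟨N, hNnear, hNopen, hqN⟩ := _root_.eventually_nhds_iff.1 hnear
  refine ⟨infDist q S + ε, by linarith, C, fun i j hij => (hdisj hij).mono (hCball i) (hCball j),
    fun i => ⟨hCclosed i, hCconn i, ?_, O i, hOopen i, hpO i, fun y hy => hOC i ⟨hy.2, hy.1⟩⟩,
    N, hNopen, hqN, fun x hx => ⟨fun i => ?_, ?_⟩⟩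
  · refine subset_inter (hCS i) ((hCball i).trans (closedBall_subset_closedBall' ?_))
    rw [dist_comm, (hpΓ i).2, add_comm]
  · exact infDist_le_infDist_of_subset (hCS i) ⟨p i, mem_of_mem_nhdsWithin (hpΓ i).1 (hCnhds i)⟩
  · obtain ⟨y, hyS, hxy⟩ := hScpt.exists_infDist_eq_dist hSne x
    obtain ⟨i, hyO⟩ := mem_iUnion.1 (hNnear x hx y hyS hxy.symm)
    exact ⟨i, infDist_eq_infDist_of_subset_of_mem (hCS i) (hOC i ⟨hyO, hyS⟩) hxy⟩

/-- **Existence of contact pieces.** Let `S ⊆ ℝⁿ` be nonempty, compact and locally connected,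
`q ∉ S`, and suppose `Γ(q) = {p₁, …, p_m}` is finite with distinct points. Then there exist
`r > dist(q, S)`, pairwise disjoint closed connected sets `Sᵢ ⊆ S ∩ closedBall(q, r)` with
each `pᵢ` in the interior of `Sᵢ` relative to `S`, and an open neighborhood `N` of `q` on
which `dist(·, S) = minᵢ dist(·, Sᵢ)`. -/
theorem exists_contact_pieces {n : ℕ} (m : ℕ)
    (S : Set (Euc n)) (hSne : S.Nonempty) (hScpt : IsCompact S)
    (hSlc : LocallyConnectedSpace S)
    (q : Euc n) (hq : q ∉ S)
    (p : Fin m → Euc n) (hpinj : Function.Injective p)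
    (hΓ : contactSet S q = Set.range p) :
    ∃ r : ℝ, Metric.infDist q S < r ∧
      ∃ Sp : Fin m → Set (Euc n),
        (Pairwise fun i j => Disjoint (Sp i) (Sp j)) ∧
        (∀ i, IsClosed (Sp i) ∧ IsConnected (Sp i) ∧
          Sp i ⊆ S ∩ Metric.closedBall q r ∧
          ∃ O : Set (Euc n), IsOpen O ∧ p i ∈ O ∧ S ∩ O ⊆ Sp i) ∧
        ∃ N : Set (Euc n), IsOpen N ∧ q ∈ N ∧ ∀ x ∈ N,
          (∀ i, Metric.infDist x S ≤ Metric.infDist x (Sp i)) ∧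
          ∃ i, Metric.infDist x S = Metric.infDist x (Sp i) :=
  exists_contact_pieces_general m S hSne hScpt hSlc q p hpinj hΓ
end
end

section
/- Strict separation along contact rays: Let S ⊆ ℝⁿ be nonempty compact, q ∈ ℝⁿ ∖ S with r = dist(q, S), and suppose Γ(q) = {p₁, …, p_m} with the pᵢ distinct. Let S₁, …, S_m ⊆ S be pairwise disjoint closed sets with pᵢ ∈ Sᵢ for each i. Then for every i, every j ≠ i, and every t ∈ (0,1), the point x = q + t·(pᵢ − q) satisfies dist(x, Sᵢ) < dist(x, Sⱼ). In particular, every point of the open segment from q to pᵢ is strictly closer to Sᵢ than to any other piece Sⱼ. -/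
/-!
Let `p = pᵢ` be a contact point of `q`, so `dist(q, S) = ‖q − p‖ =: r`, and let `x` lie on the
segment from `q` to `p`. For `y ∈ S` the triangle inequality gives
`‖x − y‖ ≥ ‖q − y‖ − ‖q − x‖ ≥ r − ‖q − x‖ = ‖x − p‖`, and in a strictly convex space equality
forces `y` onto the ray from `q` through `x` at distance `r`, i.e. `y = p`. Since `Sⱼ` is compact
and misses `p`, the distance from `x` to `Sⱼ` is attained at some `y ≠ p`, so it exceeds
`‖x − p‖ ≥ dist(x, Sᵢ)`.
-/

noncomputable section

open Set

open Metric AffineMap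

theorem lineMap_right_injective {k V P : Type*} [Ring k] [IsDomain k] [AddCommGroup V] [Module k V]
    [Module.IsTorsionFree k V] [AddTorsor V P] (q : P) {t : k} (ht : t ≠ 0) :
    Function.Injective fun p : P => lineMap q p t := by
  intro p y h
  have h' : t • (p -ᵥ q) = t • (y -ᵥ q) := by
    simpa only [lineMap_vsub_left] using congrArg (· -ᵥ q) h
  exact vsub_left_cancel (smul_right_injective V ht h')

theorem dist_lineMap_lt_dist_of_dist_le {E P : Type*} [NormedAddCommGroup E] [NormedSpace ℝ E]
    [StrictConvexSpace ℝ E] [MetricSpace P] [NormedAddTorsor E P] {q p y : P} {t : ℝ}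
    (ht0 : 0 < t) (ht1 : t ≤ 1) (hp : dist q p ≤ dist q y) (hy : y ≠ p) :
    dist (lineMap q p t) p < dist (lineMap q p t) y := by
  set x := lineMap q p t
  by_contra! h
  have hqx : dist q x = t * dist q p := by
    rw [dist_left_lineMap, Real.norm_of_nonneg ht0.le]
  have hxp : dist x p = (1 - t) * dist q p := by
    rw [dist_lineMap_right, Real.norm_of_nonneg (sub_nonneg.2 ht1)]
  have htri := dist_triangle q x y
  have hqy : dist q y = dist q p := by linarith
  have hx : x = lineMap q y t :=
    eq_lineMap_of_dist_eq_mul_of_dist_eq_mul (by rw [hqx, hqy]) (by rw [hqy]; linarith)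
  exact hy (lineMap_right_injective q ht0.ne' hx.symm)

theorem strict_separation_along_contact_rays_general {n : ℕ} (m : ℕ)
    (S : Set (Euc n)) (hScpt : IsCompact S)
    (q : Euc n)
    (p : Fin m → Euc n)
    (hΓ : contactSet S q = Set.range p)
    (Sp : Fin m → Set (Euc n))
    (hSpclosed : ∀ i, IsClosed (Sp i)) (hSpsub : ∀ i, Sp i ⊆ S)
    (hSpdisj : Pairwise fun i j => Disjoint (Sp i) (Sp j))
    (hSpmem : ∀ i, p i ∈ Sp i) :
    ∀ i j, j ≠ i → ∀ t ∈ Set.Ioo (0 : ℝ) 1,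
      Metric.infDist (q + t • (p i - q)) (Sp i) <
        Metric.infDist (q + t • (p i - q)) (Sp j) := by
  intro i j hji t ⟨ht0, ht1⟩
  have hcontact : p i ∈ contactSet S q := hΓ ▸ mem_range_self i
  rw [add_comm, ← lineMap_apply_module']
  set x := lineMap q (p i) t
  have hSpcpt : IsCompact (Sp j) := hScpt.of_isClosed_subset (hSpclosed j) (hSpsub j)
  obtain ⟨y, hy, hdist⟩ := hSpcpt.exists_infDist_eq_dist ⟨p j, hSpmem j⟩ x
  have hyp : y ≠ p i := fun h => disjoint_left.mp (hSpdisj hji) hy (h ▸ hSpmem i)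
  calc infDist x (Sp i) ≤ dist x (p i) := infDist_le_dist_of_mem (hSpmem i)
    _ < dist x y := dist_lineMap_lt_dist_of_dist_le ht0 ht1.le
          (hcontact.2 ▸ infDist_le_dist_of_mem (hSpsub j hy)) hyp
    _ = infDist x (Sp j) := hdist.symm

/-- **Strict separation along contact rays.** Let `S ⊆ ℝⁿ` be nonempty compact, `q ∉ S`, and
suppose `Γ(q) = {p₁, …, p_m}` with the `pᵢ` distinct. Let `S₁, …, S_m ⊆ S` be pairwise
disjoint closed sets with `pᵢ ∈ Sᵢ`. Then every point `x = q + t (pᵢ − q)` of the open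
segment from `q` to `pᵢ` (with `0 < t < 1`) is strictly closer to `Sᵢ` than to any
other piece `Sⱼ`. -/
theorem strict_separation_along_contact_rays {n : ℕ} (m : ℕ)
    (S : Set (Euc n)) (hSne : S.Nonempty) (hScpt : IsCompact S)
    (q : Euc n) (hq : q ∉ S)
    (p : Fin m → Euc n) (hpinj : Function.Injective p)
    (hΓ : contactSet S q = Set.range p)
    (Sp : Fin m → Set (Euc n))
    (hSpclosed : ∀ i, IsClosed (Sp i)) (hSpsub : ∀ i, Sp i ⊆ S)
    (hSpdisj : Pairwise fun i j => Disjoint (Sp i) (Sp j))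
    (hSpmem : ∀ i, p i ∈ Sp i) :
    ∀ i j, j ≠ i → ∀ t ∈ Set.Ioo (0 : ℝ) 1,
      Metric.infDist (q + t • (p i - q)) (Sp i) <
        Metric.infDist (q + t • (p i - q)) (Sp j) :=
  strict_separation_along_contact_rays_general m S hScpt q p hΓ Sp hSpclosed hSpsub hSpdisj hSpmem
end
end
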